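/- Let C be a circuit and (x^(i))_{i ∈ [ℓ+1]} a pivotal sequence of states of C. Then there exists a pivotal sequence (y^(j))_{j ∈ [ℓ'+1]} of states of C such that each y^(j) is a successor state of some x^(i), y^(0) is a successor state of x^(0), and y^(ℓ') is a successor state of x^(ℓ). -/

import Mathlib

set_option linter.unusedVariables false

attribute [local instance] Classical.propDecidable

/-- Signal values: stable `zero`, `one`, and metastable `meta`. -/
inductive BM : Type
  | zero
  | one
  | meta'
  deriving DecidableEq

/-- Embedding of stable Boolean values into `BM`. -/
def BM.ofBool : Bool → BM
  | false => BM.zero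
  | true => BM.one

/-- `inResM x y` means `y ∈ ResM(x)`, the set of partial resolutions of `x`. -/
def inResM {k : ℕ} (x y : Fin k → BM) : Prop :=
  ∀ i, x i = y i ∨ x i = BM.meta'

/-- `inRes x y` means `y ∈ Res(x)`, i.e. `y` is a complete (stable) resolution of `x`. -/
def inRes {k : ℕ} (x y : Fin k → BM) : Prop :=
  inResM x y ∧ ∀ i, y i ≠ BM.meta'

/-- The complete resolutions of `x`, viewed as Boolean words. -/
def boolRes {k : ℕ} (x : Fin k → BM) : Set (Fin k → Bool) :=
  { z | ∀ i, x i = BM.ofBool (z i) ∨ x i = BM.meta' }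

/-- The metastable (Kleene) extension `f_M : BM^k → BM` of a Boolean function
`f : B^k → B`: it outputs a stable value `b` iff all complete resolutions of the
input evaluate to `b` under `f`, and `meta` otherwise. -/
noncomputable def kleene {k : ℕ} (f : (Fin k → Bool) → Bool) (x : Fin k → BM) : BM :=
  if ∀ z ∈ boolRes x, f z = false then BM.zero
  else if ∀ z ∈ boolRes x, f z = true then BM.one
  else BM.meta'

/-- Combinational logic with `m` input nodes: formulas built from inputs,
`BM`-constants (gates of indegree 0), and gates computing the metastable extension
of a Boolean function of their in-neighbors.  (A DAG evaluates exactly like the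
formula obtained by unsharing, so this faithfully captures evaluation of
combinational logic DAGs.) -/
inductive Comb (m : ℕ) : Type
  | input : Fin m → Comb m
  | const : BM → Comb m
  | gate : (j : ℕ) → ((Fin j → Bool) → Bool) → (Fin j → Comb m) → Comb m

/-- Recursive evaluation of combinational logic on input `x ∈ BM^m`. -/
noncomputable def Comb.eval {m : ℕ} (x : Fin m → BM) : Comb m → BM
  | .input i => x i
  | .const b => b
  | .gate _ f cs => kleene f (fun t => (cs t).eval x)

/-- Register types: simple, mask-0, mask-1. -/
inductive RegType : Type
  | simple
  | mask0
  | mask1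
  deriving DecidableEq

/-- `regRead t b (o, b')` holds iff a register of type `t` in state `b` can be read
with read value `o`, moving to state `b'`:  a register in a stable state yields that
state and keeps it; a simple register in state `meta` yields `meta` and stays `meta`;
a mask-`c` register in state `meta` either yields `c` staying in state `meta`, or
yields `meta` changing its state to `1 - c`. -/
def regRead : RegType → BM → BM × BM → Prop
  | _, BM.zero, p => p = (BM.zero, BM.zero)
  | _, BM.one, p => p = (BM.one, BM.one)
  | RegType.simple, BM.meta', p => p = (BM.meta', BM.meta')
  | RegType.mask0, BM.meta', p => p = (BM.zero, BM.meta') ∨ p = (BM.meta', BM.one)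
  | RegType.mask1, BM.meta', p => p = (BM.one, BM.meta') ∨ p = (BM.meta', BM.zero)

/-- A circuit with `m` input, `k` local and `n` output registers: a type for each
register, combinational logic with `m + k` input nodes (one per non-output register)
and `k + n` output nodes (one per non-input register), and an initialization of the
non-input registers. -/
structure Circuit (m k n : ℕ) : Type where
  inType : Fin m → RegType
  locType : Fin k → RegType
  outType : Fin n → RegType
  logic : Fin (k + n) → Comb (m + k)
  init : Fin (k + n) → BM

/-- A state of a circuit: values of input, local, and output registers. -/
structure CState (m k n : ℕ) : Type where
  inp : Fin m → BM
  loc : Fin k → BM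
  out : Fin n → BM

/-- A state as a word in `BM^{m+k+n}`. -/
def CState.toVec {m k n : ℕ} (s : CState m k n) : Fin (m + (k + n)) → BM :=
  Fin.append s.inp (Fin.append s.loc s.out)

/-- Read phase: `o ∈ BM^{m+k}` are possible read values of the non-output registers
in state `s`, and `ι'` the corresponding successor states of the input registers. -/
def ReadRel {m k n : ℕ} (C : Circuit m k n) (s : CState m k n)
    (o : Fin (m + k) → BM) (ι' : Fin m → BM) : Prop :=
  (∀ i : Fin m, regRead (C.inType i) (s.inp i) (o (Fin.castAdd k i), ι' i)) ∧
  (∀ j : Fin k, ∃ st', regRead (C.locType j) (s.loc j) (o (Fin.natAdd m j), st'))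

/-- Evaluation phase: `f^G` applied to the read values. -/
noncomputable def evalLogic {m k n : ℕ} (C : Circuit m k n) (o : Fin (m + k) → BM) :
    Fin (k + n) → BM :=
  fun j => (C.logic j).eval o

/-- `Write^C(s)`: possible values written to the non-input registers. -/
def WriteSet {m k n : ℕ} (C : Circuit m k n) (s : CState m k n) :
    Set (Fin (k + n) → BM) :=
  { w | ∃ o ι', ReadRel C s o ι' ∧ inResM (evalLogic C o) w }

/-- Successor-state relation: read all non-output registers, evaluate the logic,
and write an arbitrary partial resolution of the result to the non-input registers. -/
def Succ {m k n : ℕ} (C : Circuit m k n) (s s' : CState m k n) : Prop :=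
  ∃ o ι', ReadRel C s o ι' ∧ s'.inp = ι' ∧
    inResM (evalLogic C o) (Fin.append s'.loc s'.out)

/-- `reach C r s₀ = S^C_r(s₀)`: states reachable in `r` rounds from `s₀`. -/
def reach {m k n : ℕ} (C : Circuit m k n) : ℕ → CState m k n → Set (CState m k n)
  | 0, s => {s}
  | r + 1, s => { t | ∃ u ∈ reach C r s, Succ C u t }

/-- The initial state of `C` with input `ι`. -/
def initState {m k n : ℕ} (C : Circuit m k n) (ι : Fin m → BM) : CState m k n :=
  ⟨ι, fun j => C.init (Fin.castAdd n j), fun j => C.init (Fin.natAdd k j)⟩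

/-- `C_r(ι)`: possible outputs after `r` rounds on input `ι`. -/
def Cout {m k n : ℕ} (C : Circuit m k n) (r : ℕ) (ι : Fin m → BM) :
    Set (Fin n → BM) :=
  { y | ∃ s ∈ reach C r (initState C ι), y = s.out }

/-- `r` rounds of `C` implement `f` iff `C_r(ι) ⊆ f(ι)` for all inputs `ι`. -/
def Implements {m k n : ℕ} (C : Circuit m k n) (r : ℕ)
    (f : (Fin m → BM) → Set (Fin n → BM)) : Prop :=
  ∀ ι, Cout C r ι ⊆ f ι

/-- All registers of the circuit are simple. -/
def OnlySimple {m k n : ℕ} (C : Circuit m k n) : Prop :=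
  (∀ i, C.inType i = RegType.simple) ∧ (∀ j, C.locType j = RegType.simple) ∧
    (∀ j, C.outType j = RegType.simple)

/-- `Fun_S^r`: functions implementable by `r` rounds of circuits with only simple
registers. -/
def FunS (r m n : ℕ) : Set ((Fin m → BM) → Set (Fin n → BM)) :=
  { f | ∃ k, ∃ C : Circuit m k n, OnlySimple C ∧ Implements C r f }

/-- `Fun_M^r`: functions implementable by `r` rounds of circuits with arbitrary
register types. -/
def FunM (r m n : ℕ) : Set ((Fin m → BM) → Set (Fin n → BM)) :=
  { f | ∃ k, ∃ C : Circuit m k n, Implements C r f }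

/-- A pivotal sequence over `BM^N`: consecutive elements differ in exactly one bit,
and that bit is `meta` in one of the two elements. -/
def PivotalSeq {N ℓ : ℕ} (x : Fin (ℓ + 1) → Fin N → BM) : Prop :=
  ∀ i : Fin ℓ,
    ∃ j : Fin N,
      x i.castSucc j ≠ x i.succ j ∧
      (x i.castSucc j = BM.meta' ∨ x i.succ j = BM.meta') ∧
      ∀ j' : Fin N, x i.castSucc j' ≠ x i.succ j' → j' = j

/-- A function `f : BM^m → Pow(BM^n)` is natural iff it is bit-wise and closed
(a product of component functions each taking values in `{{0}, {1}, BM}`)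
and specific (stabilizing the input restricts the output). -/
def IsNatural {m n : ℕ} (f : (Fin m → BM) → Set (Fin n → BM)) : Prop :=
  (∃ g : Fin n → (Fin m → BM) → Set BM,
      (∀ i x, g i x = {BM.zero} ∨ g i x = {BM.one} ∨ g i x = (Set.univ : Set BM)) ∧
      (∀ x, f x = { y | ∀ i, y i ∈ g i x })) ∧
  (∀ x y, inRes x y → f y ⊆ f x)

/-- The `i`-th component of the metastable closure of `f : B^m → B^n`. -/
noncomputable def mclosureC {m n : ℕ} (f : (Fin m → Bool) → Fin n → Bool)
    (x : Fin m → BM) (i : Fin n) : Set BM :=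
  if ∀ z ∈ boolRes x, f z i = false then {BM.zero}
  else if ∀ z ∈ boolRes x, f z i = true then {BM.one}
  else Set.univ

/-- The metastable closure `[f]_M : BM^m → Pow(BM^n)` of `f : B^m → B^n`. -/
noncomputable def mclosure {m n : ℕ} (f : (Fin m → Bool) → Fin n → Bool)
    (x : Fin m → BM) : Set (Fin n → BM) :=
  { y | ∀ i, y i ∈ mclosureC f x i }


/-! The canonical successor of a state reads every register without changing its state (a mask
register in state `M` yields its mask value) and writes the output of the logic unresolved. It
suffices to join the canonical successors of the ends of one pivotal step `u — w`, with the pivot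
`M` in `u`, by a pivotal path of successors of `u` or `w`; concatenating these paths along the
given sequence proves the claim. An output pivot is not read, so the canonical successors
coincide. Otherwise `u` may read the pivot as `M`; both canonical read words resolve this read,
so by monotonicity of Kleene evaluation both canonical writes are partial resolutions of the
output of the logic on it, and partial resolutions of one word are pivotally connected through
partial resolutions of it. For an input pivot one more step switches the input register itself;
if a mask hides the metastability of the pivot, `u` and `w` are read alike and that step alone
suffices. -/

open Function Relation

lemma Fin.castAdd_ne_natAdd {p q : ℕ} (i : Fin p) (j : Fin q) :
    Fin.castAdd q i ≠ Fin.natAdd p j := by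
  simp only [ne_eq, Fin.ext_iff, Fin.val_castAdd, Fin.val_natAdd]
  omega

lemma Fin.append_eq_append_iff {α : Type*} {p q : ℕ} {a a' : Fin p → α} {b b' : Fin q → α} :
    Fin.append a b = Fin.append a' b' ↔ a = a' ∧ b = b' := by
  refine ⟨fun h => ⟨funext fun i => ?_, funext fun j => ?_⟩, fun h => h.1 ▸ h.2 ▸ rfl⟩
  · simpa using congrFun h (Fin.castAdd q i)
  · simpa using congrFun h (Fin.natAdd p j)

section Words

variable {N p q : ℕ}

-- `PivotalSeq x` unfolds to `∀ i, PivotalStep (x i.castSucc) (x i.succ)`.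
def PivotalStep (u v : Fin N → BM) : Prop :=
  ∃ j, u j ≠ v j ∧ (u j = BM.meta' ∨ v j = BM.meta') ∧ ∀ j', u j' ≠ v j' → j' = j

def ResolveStep (u v : Fin N → BM) : Prop :=
  ∃ j, u j = BM.meta' ∧ v j ≠ BM.meta' ∧ ∀ i ≠ j, u i = v i

lemma ResolveStep.pivotalStep {u v : Fin N → BM} (h : ResolveStep u v) : PivotalStep u v := by
  obtain ⟨j, hu, hv, hrest⟩ := h
  refine ⟨j, hu ▸ hv.symm, .inl hu, fun i hi => ?_⟩
  by_contra hij
  exact hi (hrest i hij)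

lemma PivotalStep.symm {u v : Fin N → BM} (h : PivotalStep u v) : PivotalStep v u := by
  obtain ⟨j, hne, hM, huniq⟩ := h
  exact ⟨j, hne.symm, hM.symm, fun i hi => huniq i (Ne.symm hi)⟩

lemma PivotalStep.resolveStep_or {u v : Fin N → BM} (h : PivotalStep u v) :
    ResolveStep u v ∨ ResolveStep v u := by
  obtain ⟨j, hne, hM, huniq⟩ := h
  have hrest : ∀ i ≠ j, u i = v i := fun i hi => by
    by_contra hij
    exact hi (huniq i hij)
  rcases hM with hM | hM
  · exact .inl ⟨j, hM, hM ▸ hne.symm, hrest⟩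
  · exact .inr ⟨j, hM, hM ▸ hne, fun i hi => (hrest i hi).symm⟩

lemma resolveStep_update {u : Fin N → BM} {j : Fin N} {b : BM} (hu : u j = BM.meta')
    (hb : b ≠ BM.meta') : ResolveStep u (update u j b) :=
  ⟨j, hu, by rwa [update_self], fun _ hi => (update_of_ne hi _ _).symm⟩

lemma resolveStep_append_iff {a a' : Fin p → BM} {b b' : Fin q → BM} :
    ResolveStep (Fin.append a b) (Fin.append a' b') ↔
      (ResolveStep a a' ∧ b = b') ∨ (a = a' ∧ ResolveStep b b') := by
  constructor
  · rintro ⟨j, hu, hv, hrest⟩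
    induction j using Fin.addCases with
    | left i =>
      simp only [Fin.append_left] at hu hv
      refine .inl ⟨⟨i, hu, hv, fun i' hi' => ?_⟩, funext fun j' => ?_⟩
      · simpa using hrest (Fin.castAdd q i') (by simpa [Fin.castAdd_inj] using hi')
      · simpa using hrest (Fin.natAdd p j') (Fin.castAdd_ne_natAdd i j').symm
    | right j =>
      simp only [Fin.append_right] at hu hv
      refine .inr ⟨funext fun i' => ?_, ⟨j, hu, hv, fun j' hj' => ?_⟩⟩
      · simpa using hrest (Fin.castAdd q i') (Fin.castAdd_ne_natAdd i' j)
      · simpa using hrest (Fin.natAdd p j') (by simpa [Fin.natAdd_inj] using hj')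
  · rintro (⟨⟨i, hu, hv, hrest⟩, rfl⟩ | ⟨rfl, ⟨j, hu, hv, hrest⟩⟩)
    · refine ⟨Fin.castAdd q i, by simpa using hu, by simpa using hv, fun c hc => ?_⟩
      induction c using Fin.addCases with
      | left i' => simpa using hrest i' (by rintro rfl; exact hc rfl)
      | right j' => simp
    · refine ⟨Fin.natAdd p j, by simpa using hu, by simpa using hv, fun c hc => ?_⟩
      induction c using Fin.addCases with
      | left i' => simp
      | right j' => simpa using hrest j' (by rintro rfl; exact hc rfl)

end Words

section States

variable {m k n : ℕ}

def stateOf (ι : Fin m → BM) (w : Fin (k + n) → BM) : CState m k n :=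
  ⟨ι, fun j => w (Fin.castAdd n j), fun j => w (Fin.natAdd k j)⟩

lemma toVec_stateOf (ι : Fin m → BM) (w : Fin (k + n) → BM) :
    (stateOf ι w : CState m k n).toVec = Fin.append ι w := by
  simp only [CState.toVec, stateOf, Fin.append_castAdd_natAdd]

lemma ResolveStep.of_toVec {u w : CState m k n} (h : ResolveStep u.toVec w.toVec) :
    (ResolveStep u.inp w.inp ∧ u.loc = w.loc) ∨ (u.inp = w.inp ∧ ResolveStep u.loc w.loc) ∨
      (u.inp = w.inp ∧ u.loc = w.loc) := by
  rcases resolveStep_append_iff.mp h with ⟨hinp, hrest⟩ | ⟨hinp, hrest⟩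
  · exact .inl ⟨hinp, (Fin.append_eq_append_iff.mp hrest).1⟩
  · rcases resolveStep_append_iff.mp hrest with ⟨hloc, -⟩ | ⟨hloc, -⟩
    · exact .inr (.inl ⟨hinp, hloc⟩)
    · exact .inr (.inr ⟨hinp, hloc⟩)

lemma pivotalStep_stateOf_of_resolveStep_inp {ι ι' : Fin m → BM} (h : ResolveStep ι ι')
    (w : Fin (k + n) → BM) :
    PivotalStep (stateOf ι w : CState m k n).toVec (stateOf ι' w).toVec := by
  rw [toVec_stateOf, toVec_stateOf]
  exact (resolveStep_append_iff.mpr (.inl ⟨h, rfl⟩)).pivotalStep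

lemma pivotalStep_stateOf_of_resolveStep_write (ι : Fin m → BM) {w w' : Fin (k + n) → BM}
    (h : ResolveStep w w') :
    PivotalStep (stateOf ι w : CState m k n).toVec (stateOf ι w').toVec := by
  rw [toVec_stateOf, toVec_stateOf]
  exact (resolveStep_append_iff.mpr (.inr ⟨rfl, h⟩)).pivotalStep

def PivotalStepIn (S : Set (CState m k n)) (s t : CState m k n) : Prop :=
  s ∈ S ∧ t ∈ S ∧ PivotalStep s.toVec t.toVec

instance (S : Set (CState m k n)) : Std.Symm (PivotalStepIn S) :=
  ⟨fun _ _ ⟨hs, ht, h⟩ => ⟨ht, hs, h.symm⟩⟩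

lemma reflTransGen_pivotalStepIn_mono {S T : Set (CState m k n)} (hST : S ⊆ T) :
    ReflTransGen (PivotalStepIn S) ≤ ReflTransGen (PivotalStepIn T) :=
  ReflTransGen.mono fun _ _ ⟨hs, ht, h⟩ => ⟨hST hs, hST ht, h⟩

lemma reflTransGen_stateOf_of_inResM {S : Set (CState m k n)} {ι : Fin m → BM}
    {e a : Fin (k + n) → BM} (hS : ∀ w, inResM e w → stateOf ι w ∈ S) (ha : inResM e a) :
    ReflTransGen (PivotalStepIn S) (stateOf ι e) (stateOf ι a) := by
  have hpw : ∀ s : Finset (Fin (k + n)), inResM e (s.piecewise a e) := fun s i => by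
    by_cases hi : i ∈ s <;> simp [hi, ha i]
  have key : ∀ s : Finset (Fin (k + n)),
      ReflTransGen (PivotalStepIn S) (stateOf ι e) (stateOf ι (s.piecewise a e)) := by
    intro s
    induction s using Finset.induction_on with
    | empty => rw [Finset.piecewise_empty]
    | insert j s hj ih =>
      have hstep := hpw (insert j s)
      rw [Finset.piecewise_insert] at hstep ⊢
      have hpwj : s.piecewise a e j = e j := Finset.piecewise_eq_of_notMem _ _ _ hj
      by_cases hej : a j = e j
      · rwa [hej, ← hpwj, update_eq_self]
      have hM : e j = BM.meta' := (ha j).resolve_left (Ne.symm hej)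
      refine ih.tail ⟨hS _ (hpw s), hS _ hstep, pivotalStep_stateOf_of_resolveStep_write ι ?_⟩
      refine resolveStep_update (hpwj.trans hM) ?_
      exact fun h => hej (h.trans hM.symm)
  simpa using key Finset.univ

end States

section Evaluation

lemma inResM_refl {N : ℕ} (u : Fin N → BM) : inResM u u := fun _ => .inl rfl

lemma inResM_append {p q : ℕ} {a a' : Fin p → BM} {b b' : Fin q → BM} (ha : inResM a a')
    (hb : inResM b b') : inResM (Fin.append a b) (Fin.append a' b') := by
  intro c
  induction c using Fin.addCases with
  | left i => simpa using ha i
  | right j => simpa using hb j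

lemma inResM_update_meta {N : ℕ} {f g : Fin N → BM} {j : Fin N} (h : ∀ i ≠ j, f i = g i) :
    inResM (update f j BM.meta') g := fun i => by
  by_cases hi : i = j
  · subst hi; simp
  · simp [hi, h i hi]

lemma boolRes_mono {N : ℕ} {x x' : Fin N → BM} (h : inResM x x') : boolRes x' ⊆ boolRes x :=
  fun z hz i => (h i).elim (fun he => he ▸ hz i) .inr

lemma boolRes_nonempty {N : ℕ} (x : Fin N → BM) : (boolRes x).Nonempty :=
  ⟨fun i => decide (x i = BM.one), fun i => by cases hx : x i <;> simp [hx, BM.ofBool]⟩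

lemma kleene_mono {N : ℕ} (f : (Fin N → Bool) → Bool) {x x' : Fin N → BM}
    (h : inResM x x') : kleene f x = kleene f x' ∨ kleene f x = BM.meta' := by
  have hsub := boolRes_mono h
  obtain ⟨z, hz⟩ := boolRes_nonempty x'
  unfold kleene
  by_cases h0 : ∀ z ∈ boolRes x, f z = false
  · exact .inl (by rw [if_pos h0, if_pos fun z hz => h0 z (hsub hz)])
  rw [if_neg h0]
  by_cases h1 : ∀ z ∈ boolRes x, f z = true
  · have h0' : ¬ ∀ z ∈ boolRes x', f z = false := fun h0' =>
      Bool.false_ne_true ((h0' z hz).symm.trans (h1 z (hsub hz)))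
    exact .inl (by rw [if_pos h1, if_neg h0', if_pos fun z hz => h1 z (hsub hz)])
  · exact .inr (if_neg h1)

lemma Comb.eval_mono {M : ℕ} {o o' : Fin M → BM} (h : inResM o o') (c : Comb M) :
    c.eval o = c.eval o' ∨ c.eval o = BM.meta' := by
  induction c with
  | input i => exact h i
  | const b => exact .inl rfl
  | gate j f cs ih => exact kleene_mono f ih

lemma evalLogic_mono {m k n : ℕ} (C : Circuit m k n) {o o' : Fin (m + k) → BM}
    (h : inResM o o') : inResM (evalLogic C o) (evalLogic C o') :=
  fun j => (C.logic j).eval_mono h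

end Evaluation

section Reading

/-- The read value of a register in state `b` when a mask register in state `M` masks its
metastability. -/
def RegType.read : RegType → BM → BM
  | _, BM.zero => BM.zero
  | _, BM.one => BM.one
  | RegType.simple, BM.meta' => BM.meta'
  | RegType.mask0, BM.meta' => BM.zero
  | RegType.mask1, BM.meta' => BM.one

/-- The state a register in state `M` is left in after it has been read as `M`. -/
def RegType.metaReadState : RegType → BM
  | RegType.simple => BM.meta'
  | RegType.mask0 => BM.one
  | RegType.mask1 => BM.zero

lemma regRead_read (t : RegType) (b : BM) : regRead t b (t.read b, b) := by
  cases t <;> cases b <;> simp [RegType.read, regRead]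

lemma regRead_meta (t : RegType) : regRead t BM.meta' (BM.meta', t.metaReadState) := by
  cases t <;> simp [RegType.metaReadState, regRead]

lemma RegType.read_of_ne_meta (t : RegType) {b : BM} (hb : b ≠ BM.meta') : t.read b = b := by
  cases t <;> cases b <;> simp_all [RegType.read]

lemma RegType.read_meta_cases (t : RegType) {b : BM} (hb : b ≠ BM.meta') :
    b = t.read BM.meta' ∨ t.metaReadState = BM.meta' ∨ t.metaReadState = b := by
  cases t <;> cases b <;> simp_all [RegType.read, RegType.metaReadState]

variable {m k n : ℕ} (C : Circuit m k n)

def inpRead (s : CState m k n) : Fin m → BM := fun i => (C.inType i).read (s.inp i)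

def locRead (s : CState m k n) : Fin k → BM := fun j => (C.locType j).read (s.loc j)

noncomputable def canonicalWrite (s : CState m k n) : Fin (k + n) → BM :=
  evalLogic C (Fin.append (inpRead C s) (locRead C s))

noncomputable def canonicalSucc (s : CState m k n) : CState m k n :=
  stateOf s.inp (canonicalWrite C s)

lemma succ_stateOf {s : CState m k n} {o : Fin (m + k) → BM} {ι' : Fin m → BM}
    (h : ReadRel C s o ι') {w : Fin (k + n) → BM} (hw : inResM (evalLogic C o) w) :
    Succ C s (stateOf ι' w) :=
  ⟨o, ι', h, rfl, by simpa only [stateOf, Fin.append_castAdd_natAdd] using hw⟩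

lemma readRel_canonical (s : CState m k n) :
    ReadRel C s (Fin.append (inpRead C s) (locRead C s)) s.inp :=
  ⟨fun i => by simpa [inpRead] using regRead_read _ _,
    fun j => ⟨s.loc j, by simpa [locRead] using regRead_read _ _⟩⟩

lemma succ_canonicalSucc (s : CState m k n) : Succ C s (canonicalSucc C s) :=
  succ_stateOf C (readRel_canonical C s) (inResM_refl _)

lemma readRel_meta_inp {s : CState m k n} {i₀ : Fin m} (hM : s.inp i₀ = BM.meta') :
    ReadRel C s (Fin.append (update (inpRead C s) i₀ BM.meta') (locRead C s))
      (update s.inp i₀ (C.inType i₀).metaReadState) := by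
  refine ⟨fun i => ?_, fun j => ⟨s.loc j, by simpa [inpRead, locRead] using regRead_read _ _⟩⟩
  by_cases hi : i = i₀
  · subst hi; simpa [hM] using regRead_meta _
  · simpa [hi, inpRead] using regRead_read _ _

lemma readRel_meta_loc {s : CState m k n} {j₀ : Fin k} (hM : s.loc j₀ = BM.meta') :
    ReadRel C s (Fin.append (inpRead C s) (update (locRead C s) j₀ BM.meta')) s.inp := by
  refine ⟨fun i => by simpa [inpRead, locRead] using regRead_read _ _, fun j => ?_⟩
  by_cases hj : j = j₀
  · subst hj; exact ⟨_, by simpa [hM] using regRead_meta _⟩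
  · exact ⟨s.loc j, by simpa [hj, locRead] using regRead_read _ _⟩

end Reading

section Successors

variable {m k n : ℕ} (C : Circuit m k n)

lemma reflTransGen_succ_of_readRel {s : CState m k n} {o : Fin (m + k) → BM} {ι' : Fin m → BM}
    (h : ReadRel C s o ι') {a b : Fin (k + n) → BM} (ha : inResM (evalLogic C o) a)
    (hb : inResM (evalLogic C o) b) :
    ReflTransGen (PivotalStepIn {t | Succ C s t}) (stateOf ι' a) (stateOf ι' b) := by
  have hS : ∀ w, inResM (evalLogic C o) w → stateOf ι' w ∈ {t | Succ C s t} :=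
    fun _ hw => succ_stateOf C h hw
  exact (symm_of _ (reflTransGen_stateOf_of_inResM hS ha)).trans
    (reflTransGen_stateOf_of_inResM hS hb)

lemma reflTransGen_canonicalSucc_of_resolveStep_inp {u w : CState m k n}
    (hinp : ResolveStep u.inp w.inp) (hloc : u.loc = w.loc) :
    ReflTransGen (PivotalStepIn ({t | Succ C u t} ∪ {t | Succ C w t}))
      (canonicalSucc C u) (canonicalSucc C w) := by
  set S := {t | Succ C u t} ∪ {t | Succ C w t}
  obtain ⟨i₀, hM, hb, hrest⟩ := hinp
  set o := Fin.append (update (inpRead C u) i₀ BM.meta') (locRead C u)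
  have hread : ReadRel C u o _ := readRel_meta_inp C hM
  have hlocRead : locRead C u = locRead C w := by unfold locRead; rw [hloc]
  have hou : inResM (evalLogic C o) (canonicalWrite C u) :=
    evalLogic_mono C (inResM_append (inResM_update_meta fun _ _ => rfl) (inResM_refl _))
  have how : inResM (evalLogic C o) (canonicalWrite C w) :=
    evalLogic_mono C (inResM_append (inResM_update_meta fun i hi => by simp [inpRead, hrest i hi])
      (hlocRead ▸ inResM_refl _))
  have hfan : ReflTransGen (PivotalStepIn S) _ _ :=
    reflTransGen_pivotalStepIn_mono Set.subset_union_left _ _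
      (reflTransGen_succ_of_readRel C hread hou how)
  have hstep : ∀ W, Succ C u (stateOf u.inp W) ∨ Succ C w (stateOf u.inp W) →
      Succ C u (stateOf w.inp W) ∨ Succ C w (stateOf w.inp W) →
      PivotalStepIn S (stateOf u.inp W) (stateOf w.inp W) :=
    fun W h₁ h₂ => ⟨h₁, h₂, pivotalStep_stateOf_of_resolveStep_inp ⟨i₀, hM, hb, hrest⟩ W⟩
  have hu := succ_canonicalSucc C u
  have hw := succ_canonicalSucc C w
  -- Reading the pivot as `M` leaves input `i₀` at `M` (switch it last) or moves it to
  -- `w.inp i₀` (switch it first); otherwise the mask hides the pivot.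
  rcases (C.inType i₀).read_meta_cases hb with hmask | hsimple | hflip
  · have hW : canonicalWrite C u = canonicalWrite C w := by
      have : inpRead C u = inpRead C w := funext fun i => by
        by_cases hi : i = i₀
        · subst hi; simp only [inpRead, hM, RegType.read_of_ne_meta _ hb, ← hmask]
        · simp only [inpRead, hrest i hi]
      simp only [canonicalWrite, this, hlocRead]
    unfold canonicalSucc at hu hw ⊢
    rw [← hW] at hw ⊢
    exact .single (hstep _ (.inl hu) (.inr hw))
  · rw [hsimple, ← hM, update_eq_self] at hread hfan
    exact hfan.tail (hstep _ (.inl (succ_stateOf C hread how)) (.inr hw))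
  · have hι : update u.inp i₀ (C.inType i₀).metaReadState = w.inp := funext fun i => by
      by_cases hi : i = i₀
      · subst hi; simp [hflip]
      · simp [hi, hrest i hi]
    rw [hι] at hread hfan
    exact .head (hstep _ (.inl hu) (.inl (succ_stateOf C hread hou))) hfan

lemma reflTransGen_canonicalSucc_of_resolveStep_loc {u w : CState m k n}
    (hinp : u.inp = w.inp) (hloc : ResolveStep u.loc w.loc) :
    ReflTransGen (PivotalStepIn ({t | Succ C u t} ∪ {t | Succ C w t}))
      (canonicalSucc C u) (canonicalSucc C w) := by
  obtain ⟨j₀, hM, -, hrest⟩ := hloc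
  set o := Fin.append (inpRead C u) (update (locRead C u) j₀ BM.meta')
  have hinpRead : inpRead C u = inpRead C w := by unfold inpRead; rw [hinp]
  have hou : inResM (evalLogic C o) (canonicalWrite C u) :=
    evalLogic_mono C (inResM_append (inResM_refl _) (inResM_update_meta fun _ _ => rfl))
  have how : inResM (evalLogic C o) (canonicalWrite C w) :=
    evalLogic_mono C (inResM_append (hinpRead ▸ inResM_refl _)
      (inResM_update_meta fun j hj => by simp [locRead, hrest j hj]))
  have hfan := reflTransGen_succ_of_readRel C (readRel_meta_loc C hM) hou how
  rw [canonicalSucc, canonicalSucc, ← hinp]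
  exact reflTransGen_pivotalStepIn_mono Set.subset_union_left _ _ hfan

lemma reflTransGen_canonicalSucc_of_resolveStep {u w : CState m k n}
    (h : ResolveStep u.toVec w.toVec) :
    ReflTransGen (PivotalStepIn ({t | Succ C u t} ∪ {t | Succ C w t}))
      (canonicalSucc C u) (canonicalSucc C w) := by
  rcases h.of_toVec with ⟨hinp, hloc⟩ | ⟨hinp, hloc⟩ | ⟨hinp, hloc⟩
  · exact reflTransGen_canonicalSucc_of_resolveStep_inp C hinp hloc
  · exact reflTransGen_canonicalSucc_of_resolveStep_loc C hinp hloc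
  · have hsucc : canonicalSucc C u = canonicalSucc C w := by
      unfold canonicalSucc canonicalWrite inpRead locRead
      rw [hinp, hloc]
    rw [hsucc]

lemma reflTransGen_canonicalSucc_of_pivotalStep {u w : CState m k n}
    (h : PivotalStep u.toVec w.toVec) :
    ReflTransGen (PivotalStepIn ({t | Succ C u t} ∪ {t | Succ C w t}))
      (canonicalSucc C u) (canonicalSucc C w) := by
  rcases h.resolveStep_or with h | h
  · exact reflTransGen_canonicalSucc_of_resolveStep C h
  · rw [Set.union_comm]
    exact symm_of _ (reflTransGen_canonicalSucc_of_resolveStep C h)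

end Successors

section Sequences

variable {α : Type*} {r : α → α → Prop}

lemma reflTransGen_of_fin {ℓ : ℕ} {g : Fin (ℓ + 1) → α}
    (h : ∀ i : Fin ℓ, ReflTransGen r (g i.castSucc) (g i.succ)) :
    ReflTransGen r (g 0) (g (Fin.last ℓ)) :=
  Fin.induction (motive := fun i => ReflTransGen r (g 0) (g i)) .refl
    (fun i ih => ih.trans (h i)) (Fin.last ℓ)

lemma Relation.ReflTransGen.exists_fin {a b : α} (h : ReflTransGen r a b) :
    ∃ (ℓ : ℕ) (y : Fin (ℓ + 1) → α),
      y 0 = a ∧ y (Fin.last ℓ) = b ∧ ∀ i : Fin ℓ, r (y i.castSucc) (y i.succ) := by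
  induction h with
  | refl => exact ⟨0, fun _ => a, rfl, rfl, Fin.elim0⟩
  | @tail b c _ hbc ih =>
    obtain ⟨ℓ, y, h0, hlast, hy⟩ := ih
    refine ⟨ℓ + 1, Fin.snoc y c, ?_, Fin.snoc_last _ _, fun i => ?_⟩
    · simpa using h0
    · induction i using Fin.lastCases with
      | last => simpa [hlast] using hbc
      | cast i =>
        rw [Fin.succ_castSucc, Fin.snoc_castSucc, Fin.snoc_castSucc]
        exact hy i

end Sequences

/-- given a pivotal sequence `(x^(i))_{i ∈ [ℓ+1]}` of states of a
circuit `C`, there is a pivotal sequence `(y^(j))_{j ∈ [ℓ'+1]}` of states such that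
each `y^(j)` is a successor state of some `x^(i)`, `y^(0)` is a successor state of
`x^(0)`, and `y^(ℓ')` is a successor state of `x^(ℓ)`. -/
theorem pivotal_successor_sequence {m k n ℓ : ℕ} (C : Circuit m k n)
    (x : Fin (ℓ + 1) → CState m k n)
    (hx : PivotalSeq (fun i => (x i).toVec)) :
    ∃ ℓ' : ℕ, ∃ y : Fin (ℓ' + 1) → CState m k n,
      PivotalSeq (fun j => (y j).toVec) ∧
      (∀ j, ∃ i, Succ C (x i) (y j)) ∧
      Succ C (x 0) (y 0) ∧ Succ C (x (Fin.last ℓ)) (y (Fin.last ℓ')) := by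
  set S := {t | ∃ i, Succ C (x i) t}
  have hsub (i : Fin ℓ) : {t | Succ C (x i.castSucc) t} ∪ {t | Succ C (x i.succ) t} ⊆ S :=
    Set.union_subset (fun _ h => ⟨_, h⟩) (fun _ h => ⟨_, h⟩)
  have hpath : ReflTransGen (PivotalStepIn S) (canonicalSucc C (x 0))
      (canonicalSucc C (x (Fin.last ℓ))) :=
    reflTransGen_of_fin (g := fun i => canonicalSucc C (x i)) fun i =>
      reflTransGen_pivotalStepIn_mono (hsub i) _ _
        (reflTransGen_canonicalSucc_of_pivotalStep C (hx i))
  obtain ⟨ℓ', y, h0, hlast, hy⟩ := hpath.exists_fin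
  refine ⟨ℓ', y, fun i => (hy i).2.2, fun j => ?_, h0 ▸ succ_canonicalSucc C _,
    hlast ▸ succ_canonicalSucc C _⟩
  induction j using Fin.cases with
  | zero => exact ⟨0, h0 ▸ succ_canonicalSucc C _⟩
  | succ j => exact (hy j).2.1
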